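/- A subset Ψ of the twisted affine root system Φ is a maximal closed subroot system of Φ whose gradient Gr(Ψ) is a proper subset of Φ̊ that is closed in Φ̊ if and only if there is a maximal closed subroot system M of Φ̊ containing at least one short root such that Ψ = M̂ (the lift of M). -/

import Mathlib

noncomputable section

variable {V : Type*} [NormedAddCommGroup V] [InnerProductSpace ℝ V]

/-- The Cartan pairing `⟨β, α∨⟩ = 2(β,α)/(α,α)`. -/
def cartanPair (α β : V) : ℝ := 2 * (inner ℝ β α : ℝ) / (inner ℝ α α : ℝ)

/-- The reflection `s_α` on `V`: `s_α(β) = β - ⟨β,α∨⟩ α`. -/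
def reflV (α β : V) : V := β - cartanPair α β • α

/-- The affine reflection `s_x` on `V × ℝ` with respect to the bilinear form
`B((x,a),(y,b)) = (x,y)`. -/
def reflA (x y : V × ℝ) : V × ℝ :=
  y - (2 * (inner ℝ y.1 x.1 : ℝ) / (inner ℝ x.1 x.1 : ℝ)) • x

/-- A finite irreducible reduced crystallographic root system in `V`. -/
structure IsIrreducibleRootSystem (R : Set V) : Prop where
  finite : R.Finite
  spans : Submodule.span ℝ R = ⊤
  zero_notMem : (0 : V) ∉ R
  reduced : ∀ α ∈ R, ∀ c : ℝ, c • α ∈ R → c = 1 ∨ c = -1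
  cartan_int : ∀ α ∈ R, ∀ β ∈ R, ∃ n : ℤ, cartanPair α β = (n : ℝ)
  refl_mem : ∀ α ∈ R, ∀ β ∈ R, reflV α β ∈ R
  irred : ∀ A B : Set V, R = A ∪ B → A.Nonempty → B.Nonempty →
    ∃ a ∈ A, ∃ b ∈ B, (inner ℝ a b : ℝ) ≠ 0

/-- A subroot system of a set `Φ` of affine roots: a nonempty proper subset stable
under the reflections `s_x`, `x ∈ Ψ`. -/
def IsSubrootSystem (Φ Ψ : Set (V × ℝ)) : Prop :=
  Ψ.Nonempty ∧ Ψ ⊆ Φ ∧ Ψ ≠ Φ ∧ ∀ x ∈ Ψ, ∀ y ∈ Ψ, reflA x y ∈ Ψ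

/-- `Ψ` is closed in `Φ`. -/
def IsClosedIn (Φ Ψ : Set (V × ℝ)) : Prop := ∀ x ∈ Ψ, ∀ y ∈ Ψ, x + y ∈ Φ → x + y ∈ Ψ

def IsClosedSubrootSystem (Φ Ψ : Set (V × ℝ)) : Prop :=
  IsSubrootSystem Φ Ψ ∧ IsClosedIn Φ Ψ

/-- A maximal closed subroot system of `Φ`: any closed subroot system of `Φ`
containing it equals it. -/
def IsMaximalClosedSubrootSystem (Φ Ψ : Set (V × ℝ)) : Prop :=
  IsClosedSubrootSystem Φ Ψ ∧ ∀ Δ, IsClosedSubrootSystem Φ Δ → Ψ ⊆ Δ → Δ = Ψ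

/-- A subroot system of a finite root system `R`. -/
def IsSubrootSystemF (R S : Set V) : Prop :=
  S.Nonempty ∧ S ⊆ R ∧ S ≠ R ∧ ∀ α ∈ S, ∀ β ∈ S, reflV α β ∈ S

/-- `S` is closed in the finite root system `R`. -/
def IsClosedInF (R S : Set V) : Prop := ∀ α ∈ S, ∀ β ∈ S, α + β ∈ R → α + β ∈ S

def IsMaximalClosedSubrootSystemF (R S : Set V) : Prop :=
  (IsSubrootSystemF R S ∧ IsClosedInF R S) ∧
    ∀ T, IsSubrootSystemF R T → IsClosedInF R T → S ⊆ T → T = S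

/-- A `ℤ`-linear function on `S`: the restriction to `S` of an additive group
homomorphism from the subgroup of `V` generated by `S` to `ℤ`. -/
def IsZLinearOn (S : Set V) (p : V → ℤ) : Prop :=
  ∃ f : AddSubgroup.closure S →+ ℤ,
    ∀ α, ∀ h : α ∈ S, p α = f ⟨α, AddSubgroup.subset_closure h⟩

/-- An irreducible subset: nonempty and not a union of two nonempty mutually
orthogonal subsets. -/
def IsIrreducibleSubset (S : Set V) : Prop :=
  S.Nonempty ∧ ∀ A B : Set V, S = A ∪ B → A.Nonempty → B.Nonempty →
    ∃ a ∈ A, ∃ b ∈ B, (inner ℝ a b : ℝ) ≠ 0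

/-- A short root: squared length `a`. -/
def ShortR (R : Set V) (a : ℝ) (α : V) : Prop := α ∈ R ∧ (inner ℝ α α : ℝ) = a

/-- A long root: squared length `b`. -/
def LongR (R : Set V) (b : ℝ) (α : V) : Prop := α ∈ R ∧ (inner ℝ α α : ℝ) = b

/-- The data of a non simply laced irreducible root system `R` with short squared
length `a`, long squared length `b = m·a`, `m ∈ {2,3}`. -/
structure IsTwistedData (R : Set V) (a b : ℝ) (m : ℕ) : Prop where
  root : IsIrreducibleRootSystem R
  len : ∀ α ∈ R, (inner ℝ α α : ℝ) = a ∨ (inner ℝ α α : ℝ) = b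
  a_pos : 0 < a
  a_lt_b : a < b
  ex_short : ∃ α ∈ R, (inner ℝ α α : ℝ) = a
  ex_long : ∃ α ∈ R, (inner ℝ α α : ℝ) = b
  ratio : b = (m : ℝ) * a
  m23 : m = 2 ∨ m = 3

/-- The twisted affine root system attached to `(R, a, b, m)`. -/
def twistedRS (R : Set V) (a b : ℝ) (m : ℕ) : Set (V × ℝ) :=
  {x | (ShortR R a x.1 ∧ ∃ r : ℤ, x.2 = (r : ℝ)) ∨
       (LongR R b x.1 ∧ ∃ r : ℤ, x.2 = (m : ℝ) * (r : ℝ))}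

/-- The gradient of a set of affine roots (twisted case). -/
def GrT (Ψ : Set (V × ℝ)) : Set V := {α | ∃ c : ℝ, (α, c) ∈ Ψ}

/-- `Z_α(Ψ) = {c ∈ ℤ : α + cδ ∈ Ψ}`. -/
def ZSetT (Ψ : Set (V × ℝ)) (α : V) : Set ℤ := {c | (α, (c : ℝ)) ∈ Ψ}

/-- The difference set `{r - r' : r, r' ∈ Z_α(Ψ)}`. -/
def DiffSetT (Ψ : Set (V × ℝ)) (α : V) : Set ℤ :=
  {d | ∃ r ∈ ZSetT Ψ α, ∃ r' ∈ ZSetT Ψ α, d = r - r'}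

/-- A semi-closed subset of `R`: not closed, and any failure of closedness comes
from two short roots summing to a long root. -/
def IsSemiClosed (R : Set V) (a b : ℝ) (S : Set V) : Prop :=
  ¬ IsClosedInF R S ∧
    ∀ α ∈ S, ∀ β ∈ S, α + β ∈ R \ S →
      ShortR R a α ∧ ShortR R a β ∧ LongR R b (α + β)

/-- The lift of a subset `S ⊆ R` in the twisted affine root system. -/
def liftT (R : Set V) (a b : ℝ) (m : ℕ) (S : Set V) : Set (V × ℝ) :=
  {x | (ShortR R a x.1 ∧ x.1 ∈ S ∧ ∃ r : ℤ, x.2 = (r : ℝ)) ∨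
       (LongR R b x.1 ∧ x.1 ∈ S ∧ ∃ r : ℤ, x.2 = (m : ℝ) * (r : ℝ))}

/-! Every subroot system `Ψ` lies in the lift of its gradient, and the lift `Ŝ` of a proper,
closed, reflection-stable `S ⊆ Φ̊` is a closed subroot system with gradient `S`; so a maximal
`Ψ` with closed proper gradient is `Ŝ` for a maximal closed `S`. If `S` had only long roots,
`Ŝ` would lie in the closed subroot system `Φ̊ + mℤδ`, which contains `α + 0δ` for short `α`.

Conversely let `Δ ⊇ M̂` be a closed subroot system. The roots `α` with every `α + rδ ∈ Φ` in `Δ`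
form a closed subroot system of `Φ̊` containing `M`, hence equal to `M`. A short `μ ∈ M` has all
its affine roots `μ + rδ` in `Δ`, so `γ + cδ ∈ Δ` with `γ + μ ∈ Φ̊` forces `γ + μ ∈ M`, and
then `γ ∈ M`. That every root `γ ∉ M` sums to a root with some short root of `M` is a fact about
`Φ̊` alone: otherwise `M`, together with the roots outside `M` that sum with no short root of `M`,
would be a closed subroot system larger than `M`, hence all of `Φ̊`; then every root outside `M`
is orthogonal to the short roots of `M`, and `Φ̊` splits into two orthogonal pieces. -/

open scoped RealInnerProductSpace

variable {R : Set V} {a b : ℝ} {m : ℕ}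

section Reflection

lemma cartanPair_mul_inner_self {α : V} (β : V) (h : ⟪α, α⟫ ≠ 0) :
    cartanPair α β * ⟪α, α⟫ = 2 * ⟪β, α⟫ := by
  unfold cartanPair; field_simp

lemma reflV_self {α : V} (h : ⟪α, α⟫ ≠ 0) : reflV α α = -α := by
  unfold reflV cartanPair; field_simp; module

lemma reflV_of_inner_eq_zero {α β : V} (h : ⟪β, α⟫ = 0) : reflV α β = β := by
  simp [reflV, cartanPair, h]

lemma reflV_add (α x y : V) : reflV α (x + y) = reflV α x + reflV α y := by
  simp only [reflV, cartanPair, inner_add_left]; module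

lemma inner_reflV_self {α : V} (β : V) (h : ⟪α, α⟫ ≠ 0) :
    ⟪reflV α β, reflV α β⟫ = ⟪β, β⟫ := by
  simp only [reflV, cartanPair, inner_sub_sub_self, real_inner_smul_left, real_inner_smul_right,
    real_inner_comm α β]
  field_simp
  ring

lemma reflV_reflV {α : V} (β : V) (h : ⟪α, α⟫ ≠ 0) : reflV α (reflV α β) = β := by
  simp only [reflV, cartanPair, inner_sub_left, real_inner_smul_left]
  field_simp
  module

end Reflection

namespace IsIrreducibleRootSystem

lemma inner_self_pos (hR : IsIrreducibleRootSystem R) {α : V} (hα : α ∈ R) : 0 < ⟪α, α⟫ :=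
  real_inner_self_pos.2 fun h => hR.zero_notMem (h ▸ hα)

lemma neg_mem (hR : IsIrreducibleRootSystem R) {α : V} (hα : α ∈ R) : -α ∈ R := by
  simpa [reflV_self (hR.inner_self_pos hα).ne'] using hR.refl_mem α hα α hα

lemma add_mem_of_inner_neg (hR : IsIrreducibleRootSystem R) {α β : V} (hα : α ∈ R) (hβ : β ∈ R)
    (hneg : ⟪α, β⟫ < 0) (hne : α ≠ -β) : α + β ∈ R := by
  obtain ⟨p, hp⟩ := hR.cartan_int α hα β hβ
  obtain ⟨q, hq⟩ := hR.cartan_int β hβ α hα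
  have hA := hR.inner_self_pos hα
  have hB := hR.inner_self_pos hβ
  have hpA : (p : ℝ) * ⟪α, α⟫ = 2 * ⟪α, β⟫ := by
    rw [← hp, cartanPair_mul_inner_self β hA.ne', real_inner_comm]
  have hqB : (q : ℝ) * ⟪β, β⟫ = 2 * ⟪α, β⟫ := by
    rw [← hq, cartanPair_mul_inner_self α hB.ne']
  have hp1 : p ≤ -1 := by
    have : (p : ℝ) < 0 := by nlinarith
    exact Int.le_sub_one_of_lt (by exact_mod_cast this)
  have hq1 : q ≤ -1 := by
    have : (q : ℝ) < 0 := by nlinarith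
    exact Int.le_sub_one_of_lt (by exact_mod_cast this)
  rcases hp1.eq_or_lt with rfl | hp2
  · have hrefl : reflV α β = α + β := by rw [reflV, hp]; push_cast; module
    exact hrefl ▸ hR.refl_mem α hα β hβ
  rcases hq1.eq_or_lt with rfl | hq2
  · have hrefl : reflV β α = α + β := by rw [reflV, hq]; push_cast; module
    exact hrefl ▸ hR.refl_mem β hβ α hα
  -- two Cartan integers `≤ -2` would force `|α + β|² ≤ 0`
  have hp2' : (p : ℝ) ≤ -2 := by exact_mod_cast (by omega : p ≤ -2)
  have hq2' : (q : ℝ) ≤ -2 := by exact_mod_cast (by omega : q ≤ -2)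
  have hsum : ⟪α + β, α + β⟫ ≤ 0 := by rw [real_inner_add_add_self]; nlinarith
  exact absurd (eq_neg_of_add_eq_zero_left (real_inner_self_nonpos.1 hsum)) hne

lemma sub_mem_of_inner_pos (hR : IsIrreducibleRootSystem R) {α β : V} (hα : α ∈ R) (hβ : β ∈ R)
    (hpos : 0 < ⟪α, β⟫) (hne : α ≠ β) : α - β ∈ R := by
  rw [sub_eq_add_neg]
  exact hR.add_mem_of_inner_neg hα (hR.neg_mem hβ) (by rw [inner_neg_right]; linarith)
    (by rwa [neg_neg])

lemma add_mem_or_sub_mem (hR : IsIrreducibleRootSystem R) {α β : V} (hα : α ∈ R) (hβ : β ∈ R)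
    (h : ⟪α, β⟫ ≠ 0) (hne : α ≠ β) (hne' : α ≠ -β) : α + β ∈ R ∨ α - β ∈ R := by
  rcases h.lt_or_gt with hneg | hpos
  · exact Or.inl (hR.add_mem_of_inner_neg hα hβ hneg hne')
  · exact Or.inr (hR.sub_mem_of_inner_pos hα hβ hpos hne)

end IsIrreducibleRootSystem

lemma IsSubrootSystemF.neg_mem (hR : IsIrreducibleRootSystem R) {M : Set V}
    (hM : IsSubrootSystemF R M) {μ : V} (hμ : μ ∈ M) : -μ ∈ M := by
  simpa [reflV_self (hR.inner_self_pos (hM.2.1 hμ)).ne'] using hM.2.2.2 μ hμ μ hμ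

namespace IsTwistedData

lemma b_pos (hT : IsTwistedData R a b m) : 0 < b := hT.a_pos.trans hT.a_lt_b

/-- The squared lengths of `u + v` and `v` lie in `{a, b}` with `0 < a < b`, so they differ by
less than `b`, while `|u + v|² - |v|² = (⟨v, u∨⟩ + 1) b`; hence `⟨v, u∨⟩ = -1`. -/
lemma two_inner_eq_neg_of_long (hT : IsTwistedData R a b m) {u v : V} (hu : u ∈ R) (hv : v ∈ R)
    (hul : ⟪u, u⟫ = b) (huv : u + v ∈ R) : 2 * ⟪u, v⟫ = -b := by
  obtain ⟨n, hn⟩ := hT.root.cartan_int u hu v hv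
  have hb := hT.b_pos
  have hnb : (n : ℝ) * b = 2 * ⟪u, v⟫ := by
    rw [← hul, ← hn, cartanPair_mul_inner_self v (hul ▸ hb.ne'), real_inner_comm]
  have hdiff : ((n : ℝ) + 1) * b = ⟪u + v, u + v⟫ - ⟪v, v⟫ := by
    rw [real_inner_add_add_self, hul]; linarith
  obtain ⟨hlo, hhi⟩ : -b < ((n : ℝ) + 1) * b ∧ ((n : ℝ) + 1) * b < b := by
    rw [hdiff]
    rcases hT.len v hv with h | h <;> rcases hT.len _ huv with h' | h' <;> rw [h, h'] <;>
      constructor <;> linarith [hT.a_pos, hT.a_lt_b]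
  have hn0 : (n : ℝ) < 0 := by nlinarith
  have hn2 : (-2 : ℝ) < n := by nlinarith
  have hn : n = -1 := by
    have : n < 0 := by exact_mod_cast hn0
    have : -2 < n := by exact_mod_cast hn2
    omega
  rw [hn] at hnb; push_cast at hnb; linarith

lemma inner_add_self_of_long (hT : IsTwistedData R a b m) {u v : V} (hu : u ∈ R) (hv : v ∈ R)
    (hul : ⟪u, u⟫ = b) (huv : u + v ∈ R) : ⟪u + v, u + v⟫ = ⟪v, v⟫ := by
  rw [real_inner_add_add_self, hul]
  linarith [hT.two_inner_eq_neg_of_long hu hv hul huv]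

lemma add_notMem_of_long_of_inner_eq_zero (hT : IsTwistedData R a b m) {u v : V} (hu : u ∈ R)
    (hv : v ∈ R) (hul : ⟪u, u⟫ = b) (h : ⟪u, v⟫ = 0) : u + v ∉ R := fun huv => by
  have := hT.two_inner_eq_neg_of_long hu hv hul huv
  linarith [hT.b_pos]

lemma cartanPair_short_long (hT : IsTwistedData R a b m) {s l : V} (hs : ⟪s, s⟫ = a)
    (hl : ⟪l, l⟫ = b) : cartanPair s l = m * cartanPair l s := by
  unfold cartanPair
  rw [hs, hl, hT.ratio, real_inner_comm l s]
  have := hT.a_pos.ne'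
  have : (m : ℝ) ≠ 0 := by rcases hT.m23 with rfl | rfl <;> norm_num
  field_simp

end IsTwistedData

section AffineRoots

lemma reflA_eq (x y : V × ℝ) :
    reflA x y = (reflV x.1 y.1, y.2 - cartanPair x.1 y.1 * x.2) := by
  ext <;> simp [reflA, reflV, cartanPair]

lemma fst_mem_of_mem_twistedRS {x : V × ℝ} (hx : x ∈ twistedRS R a b m) : x.1 ∈ R := by
  rcases hx with ⟨h, -⟩ | ⟨h, -⟩ <;> exact h.1

lemma exists_int_of_mem_twistedRS {x : V × ℝ} (hx : x ∈ twistedRS R a b m) :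
    ∃ r : ℤ, x.2 = r := by
  rcases hx with ⟨-, r, hr⟩ | ⟨-, r, hr⟩
  · exact ⟨r, hr⟩
  · exact ⟨m * r, by rw [hr]; push_cast; ring⟩

lemma IsTwistedData.exists_mul_of_mem_twistedRS (hT : IsTwistedData R a b m) {x : V × ℝ}
    (hx : x ∈ twistedRS R a b m) (hl : ⟪x.1, x.1⟫ = b) : ∃ r : ℤ, x.2 = m * r := by
  rcases hx with ⟨hs, -⟩ | ⟨-, hr⟩
  · exact absurd (hl ▸ hs.2) hT.a_lt_b.ne'
  · exact hr

lemma IsTwistedData.mk_zero_mem_twistedRS (hT : IsTwistedData R a b m) {α : V} (hα : α ∈ R) :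
    (α, 0) ∈ twistedRS R a b m := by
  rcases hT.len α hα with h | h
  · exact Or.inl ⟨⟨hα, h⟩, 0, by simp⟩
  · exact Or.inr ⟨⟨hα, h⟩, 0, by simp⟩

lemma mk_mem_twistedRS_of_inner_self_eq {α β : V} {t : ℝ} (h : (α, t) ∈ twistedRS R a b m)
    (hβ : β ∈ R) (hlen : ⟪β, β⟫ = ⟪α, α⟫) : (β, t) ∈ twistedRS R a b m := by
  rcases h with ⟨hs, hr⟩ | ⟨hl, hr⟩
  · exact Or.inl ⟨⟨hβ, hlen.trans hs.2⟩, hr⟩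
  · exact Or.inr ⟨⟨hβ, hlen.trans hl.2⟩, hr⟩

lemma IsTwistedData.mk_mem_twistedRS_left_or_right (hT : IsTwistedData R a b m) {α β : V}
    {t : ℝ} (hα : α ∈ R) (hβ : β ∈ R) (h : (α + β, t) ∈ twistedRS R a b m) :
    (α, t) ∈ twistedRS R a b m ∨ (β, t) ∈ twistedRS R a b m := by
  obtain ⟨r, hr⟩ := exists_int_of_mem_twistedRS h
  rcases hT.len α hα with hαs | hαl
  · exact Or.inl (Or.inl ⟨⟨hα, hαs⟩, r, hr⟩)
  rcases hT.len β hβ with hβs | hβl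
  · exact Or.inr (Or.inl ⟨⟨hβ, hβs⟩, r, hr⟩)
  have hlong := (hT.inner_add_self_of_long hα hβ hαl (fst_mem_of_mem_twistedRS h)).trans hβl
  exact Or.inl (Or.inr ⟨⟨hα, hαl⟩, hT.exists_mul_of_mem_twistedRS (x := (α + β, t)) h hlong⟩)

lemma IsTwistedData.reflA_mem_twistedRS (hT : IsTwistedData R a b m) {x y : V × ℝ}
    (hx : x ∈ twistedRS R a b m) (hy : y ∈ twistedRS R a b m) :
    reflA x y ∈ twistedRS R a b m := by
  have hxR := fst_mem_of_mem_twistedRS hx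
  have hyR := fst_mem_of_mem_twistedRS hy
  have hwR := hT.root.refl_mem x.1 hxR y.1 hyR
  have hlen := inner_reflV_self y.1 (hT.root.inner_self_pos hxR).ne'
  obtain ⟨n, hn⟩ := hT.root.cartan_int x.1 hxR y.1 hyR
  obtain ⟨s, hs⟩ := exists_int_of_mem_twistedRS hx
  rw [reflA_eq]
  rcases hT.len y.1 hyR with hys | hyl
  · obtain ⟨r, hr⟩ := exists_int_of_mem_twistedRS hy
    exact Or.inl ⟨⟨hwR, hlen.trans hys⟩, r - n * s, by simp only [hr, hs, hn]; push_cast; ring⟩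
  · obtain ⟨r, hr⟩ := hT.exists_mul_of_mem_twistedRS hy hyl
    -- for `x` short, `⟨y, x∨⟩ = m ⟨x, y∨⟩`; for `x` long, `x.2 ∈ mℤ`
    obtain ⟨k, hk⟩ : ∃ k : ℤ, cartanPair x.1 y.1 * x.2 = m * k := by
      rcases hT.len x.1 hxR with hxs | hxl
      · obtain ⟨n', hn'⟩ := hT.root.cartan_int y.1 hyR x.1 hxR
        exact ⟨n' * s, by rw [hT.cartanPair_short_long hxs hyl, hn', hs]; push_cast; ring⟩
      · obtain ⟨s', hs'⟩ := hT.exists_mul_of_mem_twistedRS hx hxl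
        exact ⟨n * s', by rw [hn, hs']; push_cast; ring⟩
    exact Or.inr ⟨⟨hwR, hlen.trans hyl⟩, r - k, by simp only [hr, hk]; push_cast; ring⟩

end AffineRoots

section Lift

lemma mem_liftT_iff {S : Set V} {x : V × ℝ} :
    x ∈ liftT R a b m S ↔ x ∈ twistedRS R a b m ∧ x.1 ∈ S := by
  simp only [liftT, twistedRS, Set.mem_ofPred_eq]
  tauto

lemma liftT_mono {S T : Set V} (h : S ⊆ T) : liftT R a b m S ⊆ liftT R a b m T := fun _ hx =>
  mem_liftT_iff.2 ⟨(mem_liftT_iff.1 hx).1, h (mem_liftT_iff.1 hx).2⟩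

lemma subset_liftT_GrT {Ψ : Set (V × ℝ)} (h : Ψ ⊆ twistedRS R a b m) :
    Ψ ⊆ liftT R a b m (GrT Ψ) := fun x hx =>
  mem_liftT_iff.2 ⟨h hx, x.2, hx⟩

lemma IsTwistedData.GrT_liftT (hT : IsTwistedData R a b m) {S : Set V} (hS : S ⊆ R) :
    GrT (liftT R a b m S) = S := by
  ext α
  refine ⟨fun ⟨_, hc⟩ => (mem_liftT_iff.1 hc).2, fun hα => ⟨0, ?_⟩⟩
  exact mem_liftT_iff.2 ⟨hT.mk_zero_mem_twistedRS (hS hα), hα⟩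

lemma isSubrootSystemF_GrT {Φ Ψ : Set (V × ℝ)} (hΨ : IsSubrootSystem Φ Ψ) (hGr : GrT Ψ ⊂ R) :
    IsSubrootSystemF R (GrT Ψ) := by
  obtain ⟨⟨x, hx⟩, -, -, hstab⟩ := hΨ
  refine ⟨⟨x.1, x.2, hx⟩, hGr.1, hGr.ne, ?_⟩
  rintro α ⟨c, hc⟩ β ⟨d, hd⟩
  exact ⟨_, by simpa [reflA_eq] using hstab _ hc _ hd⟩

lemma IsTwistedData.liftT_isClosedSubrootSystem (hT : IsTwistedData R a b m) {S : Set V}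
    (hS : IsSubrootSystemF R S) (hcl : IsClosedInF R S) :
    IsClosedSubrootSystem (twistedRS R a b m) (liftT R a b m S) := by
  obtain ⟨⟨α, hα⟩, hSR, hSne, hstab⟩ := hS
  refine ⟨⟨⟨(α, 0), mem_liftT_iff.2 ⟨hT.mk_zero_mem_twistedRS (hSR hα), hα⟩⟩,
    fun x hx => (mem_liftT_iff.1 hx).1, fun h => hSne ?_, fun x hx y hy => ?_⟩,
    fun x hx y hy hxy => ?_⟩
  · refine hSR.antisymm fun β hβ => ?_
    have : (β, 0) ∈ liftT R a b m S := h ▸ hT.mk_zero_mem_twistedRS hβ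
    exact (mem_liftT_iff.1 this).2
  · rw [mem_liftT_iff] at hx hy ⊢
    exact ⟨hT.reflA_mem_twistedRS hx.1 hy.1, by simpa [reflA_eq] using hstab _ hx.2 _ hy.2⟩
  · rw [mem_liftT_iff] at hx hy ⊢
    exact ⟨hxy, hcl _ hx.2 _ hy.2 (fst_mem_of_mem_twistedRS hxy)⟩

end Lift

/-- `Φ̊ + mℤδ`, a copy of the untwisted affine root system of `Φ̊` inside `Φ`. -/
def untwistedPart (R : Set V) (a b : ℝ) (m : ℕ) : Set (V × ℝ) :=
  {x ∈ twistedRS R a b m | ∃ r : ℤ, x.2 = m * r}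

lemma IsTwistedData.untwistedPart_isClosedSubrootSystem (hT : IsTwistedData R a b m) :
    IsClosedSubrootSystem (twistedRS R a b m) (untwistedPart R a b m) := by
  obtain ⟨α, hα, hαs⟩ := hT.ex_short
  refine ⟨⟨⟨(α, 0), hT.mk_zero_mem_twistedRS hα, 0, by simp⟩, fun x hx => hx.1, fun h => ?_,
    fun x hx y hy => ?_⟩, fun x hx y hy hxy => ?_⟩
  · obtain ⟨-, r, hr⟩ : ((α, 1) : V × ℝ) ∈ untwistedPart R a b m :=
      h ▸ Or.inl ⟨⟨hα, hαs⟩, 1, by simp⟩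
    have : ((m * r : ℤ) : ℝ) = 1 := by push_cast; exact hr.symm
    have : (m : ℤ) * r = 1 := by exact_mod_cast this
    rcases hT.m23 with rfl | rfl <;> omega
  · obtain ⟨hx, s, hs⟩ := hx
    obtain ⟨hy, r, hr⟩ := hy
    obtain ⟨n, hn⟩ := hT.root.cartan_int x.1 (fst_mem_of_mem_twistedRS hx) y.1
      (fst_mem_of_mem_twistedRS hy)
    refine ⟨hT.reflA_mem_twistedRS hx hy, r - n * s, ?_⟩
    rw [reflA_eq]
    simp only [hr, hs, hn]
    push_cast
    ring
  · obtain ⟨-, s, hs⟩ := hx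
    obtain ⟨-, r, hr⟩ := hy
    exact ⟨hxy, s + r, by simp only [Prod.snd_add, hs, hr]; push_cast; ring⟩

section ShortRoots

variable {M : Set V}

def ShortOrthogonal (a : ℝ) (M : Set V) (v : V) : Prop :=
  ∀ μ ∈ M, ⟪μ, μ⟫ = a → ⟪v, μ⟫ = 0

def ShortSumFree (R : Set V) (a : ℝ) (M : Set V) (v : V) : Prop :=
  ∀ μ ∈ M, ⟪μ, μ⟫ = a → v + μ ∉ R

lemma ShortSumFree.shortOrthogonal (hR : IsIrreducibleRootSystem R) (hMR : M ⊆ R)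
    (hMneg : ∀ μ ∈ M, -μ ∈ M) {v : V} (hv : v ∈ R) (hvM : v ∉ M) (h : ShortSumFree R a M v) :
    ShortOrthogonal a M v := by
  intro μ hμ hs
  by_contra hne
  rcases hR.add_mem_or_sub_mem hv (hMR hμ) hne (fun h => hvM (h ▸ hμ))
    (fun h => hvM (h ▸ hMneg μ hμ)) with hsum | hsub
  · exact h μ hμ hs hsum
  · exact h (-μ) (hMneg μ hμ) (by rwa [inner_neg_neg]) (by rwa [← sub_eq_add_neg])

lemma ShortSumFree.reflV (hR : IsIrreducibleRootSystem R) {u v : V} (hu : u ∈ R)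
    (huo : ShortOrthogonal a M u) (hv : ShortSumFree R a M v) :
    ShortSumFree R a M (reflV u v) := by
  intro μ hμ hs hw
  have := hR.refl_mem u hu _ hw
  rw [reflV_add, reflV_reflV v (hR.inner_self_pos hu).ne',
    reflV_of_inner_eq_zero (by rw [real_inner_comm]; exact huo μ hμ hs)] at this
  exact hv μ hμ hs this

/-- A long `p ∈ M` meeting a short `μ ∈ M` is `(p ± μ) ∓ μ`, where `p ± μ` is a short root of
`M`. -/
lemma IsTwistedData.inner_eq_zero_of_shortOrthogonal (hT : IsTwistedData R a b m) (hMR : M ⊆ R)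
    (hMcl : IsClosedInF R M) (hMneg : ∀ μ ∈ M, -μ ∈ M) {p v : V} (hp : p ∈ M)
    (hpo : ¬ ShortOrthogonal a M p) (hv : ShortOrthogonal a M v) : ⟪v, p⟫ = 0 := by
  obtain ⟨μ, hμ, hs, hpμ⟩ : ∃ μ ∈ M, ⟪μ, μ⟫ = a ∧ ⟪p, μ⟫ ≠ 0 := by
    simpa [ShortOrthogonal] using hpo
  rcases hT.len p (hMR hp) with hps | hpl
  · exact hv p hp hps
  have key : ∀ μ ∈ M, ⟪μ, μ⟫ = a → p + μ ∈ R → ⟪v, p⟫ = 0 := fun μ hμ hs hsum => by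
    have hshort := (hT.inner_add_self_of_long (hMR hp) (hMR hμ) hpl hsum).trans hs
    have := hv _ (hMcl p hp μ hμ hsum) hshort
    rwa [inner_add_right, hv μ hμ hs, add_zero] at this
  have hne : ∀ ν, ⟪ν, ν⟫ = a → p ≠ ν := fun ν hν h => by
    rw [h, hν] at hpl; exact hT.a_lt_b.ne hpl
  rcases hT.root.add_mem_or_sub_mem (hMR hp) (hMR hμ) hpμ (hne μ hs)
    (hne (-μ) (by rwa [inner_neg_neg])) with hsum | hsub
  · exact key μ hμ hs hsum
  · exact key (-μ) (hMneg μ hμ) (by rwa [inner_neg_neg]) (by rwa [← sub_eq_add_neg])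

lemma ShortSumFree.add_add_notMem (hR : IsIrreducibleRootSystem R) (hMneg : ∀ μ ∈ M, -μ ∈ M)
    {u v μ : V} (hu : u ∈ R) (hvM : v ∉ M) (hv : ShortSumFree R a M v) (hμ : μ ∈ M)
    (hs : ⟪μ, μ⟫ = a) (hpos : 0 < ⟪u + v + μ, u⟫) : u + v + μ ∉ R := fun hz => by
  have hne : u + v + μ ≠ u := fun h => by
    rw [add_assoc, add_eq_left] at h
    exact hvM (eq_neg_of_add_eq_zero_left h ▸ hMneg μ hμ)
  have := hR.sub_mem_of_inner_pos hz hu hpos hne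
  rw [add_assoc, add_sub_cancel_left] at this
  exact hv μ hμ hs this

def shortSumFreeExtension (R : Set V) (a : ℝ) (M : Set V) : Set V :=
  M ∪ {v | v ∈ R ∧ v ∉ M ∧ ShortSumFree R a M v}

lemma IsTwistedData.add_mem_shortSumFreeExtension (hT : IsTwistedData R a b m) (hMR : M ⊆ R)
    (hMcl : IsClosedInF R M) (hMneg : ∀ μ ∈ M, -μ ∈ M) {u v : V} (hu : u ∈ M) (hvR : v ∈ R)
    (hvM : v ∉ M) (hv : ShortSumFree R a M v) (huv : u + v ∈ R) :
    u + v ∈ R ∧ u + v ∉ M ∧ ShortSumFree R a M (u + v) := by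
  have hub : ⟪u, u⟫ = b :=
    (hT.len u (hMR hu)).resolve_left fun hs => hv u hu hs (by rwa [add_comm])
  have hinner := hT.two_inner_eq_neg_of_long (hMR hu) hvR hub huv
  have huo : ShortOrthogonal a M u := by
    by_contra huo
    have := hT.inner_eq_zero_of_shortOrthogonal hMR hMcl hMneg hu huo
      (hv.shortOrthogonal hT.root hMR hMneg hvR hvM)
    rw [real_inner_comm] at this
    linarith [hT.b_pos]
  refine ⟨huv, fun h => hvM ?_, fun μ hμ hs => ?_⟩
  · simpa using hMcl _ h _ (hMneg u hu) (by simpa using hvR)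
  · -- `⟪u + v + μ, u⟫ = b - b / 2 + 0`
    refine hv.add_add_notMem hT.root hMneg (hMR hu) hvM hμ hs ?_
    rw [inner_add_left, inner_add_left, hub, real_inner_comm u v, real_inner_comm u μ,
      huo μ hμ hs]
    linarith [hT.b_pos]

lemma IsTwistedData.isClosedInF_shortSumFreeExtension (hT : IsTwistedData R a b m)
    (hMR : M ⊆ R) (hMcl : IsClosedInF R M) (hMneg : ∀ μ ∈ M, -μ ∈ M) :
    IsClosedInF R (shortSumFreeExtension R a M) := by
  rintro u (hu | ⟨huR, huM, hu⟩) v (hv | ⟨hvR, hvM, hv⟩) huv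
  · exact Or.inl (hMcl u hu v hv huv)
  · exact Or.inr (hT.add_mem_shortSumFreeExtension hMR hMcl hMneg hu hvR hvM hv huv)
  · rw [add_comm] at huv ⊢
    exact Or.inr (hT.add_mem_shortSumFreeExtension hMR hMcl hMneg hv huR huM hu huv)
  by_cases hsumM : u + v ∈ M
  · exact Or.inl hsumM
  refine Or.inr ⟨huv, hsumM, fun μ hμ hs hz => ?_⟩
  have huo := hu.shortOrthogonal hT.root hMR hMneg huR huM μ hμ hs
  have hvo := hv.shortOrthogonal hT.root hMR hMneg hvR hvM μ hμ hs
  -- `⟪z, u⟫ + ⟪z, v⟫ = |u + v|² > 0` for `z = u + v + μ`, so one of them is positive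
  have hpos : 0 < ⟪u + v + μ, u⟫ + ⟪u + v + μ, v⟫ := by
    have hμuv : ⟪μ, u + v⟫ = 0 := by
      rw [inner_add_right, real_inner_comm u μ, real_inner_comm v μ, huo, hvo, add_zero]
    rw [← inner_add_right, inner_add_left, hμuv, add_zero]
    exact hT.root.inner_self_pos huv
  rcases lt_or_ge 0 ⟪u + v + μ, u⟫ with hu' | hu'
  · exact hv.add_add_notMem hT.root hMneg huR hvM hμ hs hu' hz
  · refine hu.add_add_notMem hT.root hMneg hvR huM hμ hs ?_ (by rwa [add_comm v])
    rw [add_comm v]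
    linarith

lemma IsTwistedData.reflV_mem_shortSumFreeExtension (hT : IsTwistedData R a b m) (hMR : M ⊆ R)
    (hMcl : IsClosedInF R M) (hMstab : ∀ α ∈ M, ∀ β ∈ M, reflV α β ∈ M)
    (hMneg : ∀ μ ∈ M, -μ ∈ M) {u v : V} (hu : u ∈ shortSumFreeExtension R a M)
    (hv : v ∈ shortSumFreeExtension R a M) : reflV u v ∈ shortSumFreeExtension R a M := by
  by_cases hvu : ⟪v, u⟫ = 0
  · rwa [reflV_of_inner_eq_zero hvu]
  by_cases hw : reflV u v ∈ M
  · exact Or.inl hw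
  have huR : u ∈ R := hu.elim (fun h => hMR h) (·.1)
  have hvR : v ∈ R := hv.elim (fun h => hMR h) (·.1)
  suffices ShortOrthogonal a M u ∧ ShortSumFree R a M v from
    Or.inr ⟨hT.root.refl_mem u huR v hvR, hw, this.2.reflV hT.root huR this.1⟩
  rcases hu with hu | ⟨-, huM, hu⟩ <;> rcases hv with hv | ⟨-, hvM, hv⟩
  · exact absurd (hMstab u hu v hv) hw
  · exact ⟨not_not.1 fun h => hvu (hT.inner_eq_zero_of_shortOrthogonal hMR hMcl hMneg hu h
      (hv.shortOrthogonal hT.root hMR hMneg hvR hvM)), hv⟩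
  · -- `v ∈ M` meets `u`, which is orthogonal to the short roots of `M`; so `v` is long and
    -- orthogonal to them too, and a long root plus an orthogonal short root is never a root
    have huo := hu.shortOrthogonal hT.root hMR hMneg huR huM
    have hvo : ShortOrthogonal a M v := not_not.1 fun h => hvu (by
      rw [real_inner_comm]; exact hT.inner_eq_zero_of_shortOrthogonal hMR hMcl hMneg hv h huo)
    have hvl : ⟪v, v⟫ = b :=
      (hT.len v hvR).resolve_left fun hs => hvu (by rw [real_inner_comm]; exact huo v hv hs)
    exact ⟨huo, fun μ hμ hs =>
      hT.add_notMem_of_long_of_inner_eq_zero hvR (hMR hμ) hvl (hvo μ hμ hs)⟩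
  · exact ⟨hu.shortOrthogonal hT.root hMR hMneg huR huM, hv⟩

lemma IsTwistedData.exists_short_add_mem (hT : IsTwistedData R a b m)
    (hM : IsMaximalClosedSubrootSystemF R M) (hshort : ∃ μ ∈ M, ShortR R a μ) {γ : V}
    (hγ : γ ∈ R) (hγM : γ ∉ M) : ∃ μ ∈ M, ⟪μ, μ⟫ = a ∧ γ + μ ∈ R := by
  obtain ⟨⟨hMsub, hMcl⟩, hMmax⟩ := hM
  have hMneg := fun μ (hμ : μ ∈ M) => hMsub.neg_mem hT.root hμ
  obtain ⟨⟨μ₀, hμ₀⟩, hMR, -, hMstab⟩ := hMsub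
  by_contra! hγfree
  have hγT : γ ∈ shortSumFreeExtension R a M := Or.inr ⟨hγ, hγM, hγfree⟩
  have hTR : shortSumFreeExtension R a M = R := by
    by_contra hne
    refine hγM (hMmax _ ⟨⟨μ₀, Or.inl hμ₀⟩, Set.union_subset hMR fun v hv => hv.1, hne,
      fun u hu v hv => hT.reflV_mem_shortSumFreeExtension hMR hMcl hMstab hMneg hu hv⟩
      (hT.isClosedInF_shortSumFreeExtension hMR hMcl hMneg) Set.subset_union_left ▸ hγT)
  -- as the extension is all of `R`, every root outside `M` is orthogonal to the short roots of `M`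
  obtain ⟨μ, hμ, hμR, hμs⟩ := hshort
  obtain ⟨p, ⟨hpR, hpo⟩, q, ⟨-, hqo⟩, hpq⟩ := hT.root.irred
    {p ∈ R | ¬ ShortOrthogonal a M p} {q ∈ R | ShortOrthogonal a M q}
    (by ext; simp only [Set.mem_union, Set.mem_ofPred_eq]; tauto)
    ⟨μ, hμR, fun h => (hT.a_pos.trans_eq hμs.symm).ne' (h μ hμ hμs)⟩
    ⟨γ, hγ, ShortSumFree.shortOrthogonal hT.root hMR hMneg hγ hγM hγfree⟩
  have hpM : p ∈ M := by
    rcases hTR ▸ hpR with hpM | ⟨-, hpM, hp⟩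
    · exact hpM
    · exact absurd (hp.shortOrthogonal hT.root hMR hMneg hpR hpM) hpo
  exact hpq (by
    rw [real_inner_comm]; exact hT.inner_eq_zero_of_shortOrthogonal hMR hMcl hMneg hpM hpo hqo)

end ShortRoots

section Maximality

variable {M : Set V} {Δ : Set (V × ℝ)}

def fullGradient (R : Set V) (a b : ℝ) (m : ℕ) (Δ : Set (V × ℝ)) : Set V :=
  {α ∈ R | ∀ t : ℝ, (α, t) ∈ twistedRS R a b m → (α, t) ∈ Δ}

lemma IsTwistedData.isClosedInF_fullGradient (hT : IsTwistedData R a b m)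
    (hΔ : IsClosedIn (twistedRS R a b m) Δ) : IsClosedInF R (fullGradient R a b m Δ) := by
  refine fun α ⟨hαR, hα⟩ β ⟨hβR, hβ⟩ hαβ => ⟨hαβ, fun t ht => ?_⟩
  rcases hT.mk_mem_twistedRS_left_or_right hαR hβR ht with h | h
  · simpa using hΔ _ (hα t h) _ (hβ 0 (hT.mk_zero_mem_twistedRS hβR)) (by simpa using ht)
  · simpa using hΔ _ (hα 0 (hT.mk_zero_mem_twistedRS hαR)) _ (hβ t h) (by simpa using ht)

lemma IsTwistedData.reflV_mem_fullGradient (hT : IsTwistedData R a b m)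
    (hΔ : ∀ x ∈ Δ, ∀ y ∈ Δ, reflA x y ∈ Δ) {α β : V} (hα : α ∈ fullGradient R a b m Δ)
    (hβ : β ∈ fullGradient R a b m Δ) : reflV α β ∈ fullGradient R a b m Δ := by
  refine ⟨hT.root.refl_mem α hα.1 β hβ.1, fun t ht => ?_⟩
  have hβt := mk_mem_twistedRS_of_inner_self_eq ht hβ.1
    (inner_reflV_self β (hT.root.inner_self_pos hα.1).ne').symm
  simpa [reflA_eq] using hΔ _ (hα.2 0 (hT.mk_zero_mem_twistedRS hα.1)) _ (hβ.2 t hβt)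

lemma fullGradient_ne (hΔΦ : Δ ⊆ twistedRS R a b m) (hne : Δ ≠ twistedRS R a b m) :
    fullGradient R a b m Δ ≠ R := fun h => by
  refine hne (hΔΦ.antisymm fun x hx => ?_)
  have hx1 : x.1 ∈ fullGradient R a b m Δ := by rw [h]; exact fst_mem_of_mem_twistedRS hx
  exact hx1.2 x.2 hx

lemma IsTwistedData.fullGradient_eq (hT : IsTwistedData R a b m)
    (hM : IsMaximalClosedSubrootSystemF R M)
    (hΔ : IsClosedSubrootSystem (twistedRS R a b m) Δ) (hsub : liftT R a b m M ⊆ Δ) :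
    fullGradient R a b m Δ = M := by
  obtain ⟨⟨⟨⟨μ, hμ⟩, hMR, -⟩, -⟩, hMmax⟩ := hM
  obtain ⟨⟨-, hΔΦ, hne, hstab⟩, hcl⟩ := hΔ
  have hMfull : M ⊆ fullGradient R a b m Δ := fun α hα =>
    ⟨hMR hα, fun _ ht => hsub (mem_liftT_iff.2 ⟨ht, hα⟩)⟩
  exact hMmax _ ⟨⟨μ, hMfull hμ⟩, fun _ h => h.1, fullGradient_ne hΔΦ hne,
    fun _ hα _ hβ => hT.reflV_mem_fullGradient hstab hα hβ⟩ (hT.isClosedInF_fullGradient hcl) hMfull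

/-- `μ + rδ ∈ M̂ ⊆ Δ` for every integer `r`, since `μ` is short. -/
lemma add_short_mem_fullGradient (hΔ : IsClosedSubrootSystem (twistedRS R a b m) Δ)
    (hsub : liftT R a b m M ⊆ Δ) {x : V × ℝ} (hx : x ∈ Δ) {μ : V} (hμM : μ ∈ M)
    (hμ : ShortR R a μ) (hsum : x.1 + μ ∈ R) : x.1 + μ ∈ fullGradient R a b m Δ := by
  refine ⟨hsum, fun t ht => ?_⟩
  obtain ⟨r, hr⟩ := exists_int_of_mem_twistedRS (hΔ.1.2.1 hx)
  obtain ⟨j, hj⟩ : ∃ j : ℤ, t = j := exists_int_of_mem_twistedRS ht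
  have hμΔ : (μ, ((j - r : ℤ) : ℝ)) ∈ Δ := hsub (mem_liftT_iff.2 ⟨Or.inl ⟨hμ, j - r, rfl⟩, hμM⟩)
  have hxμ : x + (μ, ((j - r : ℤ) : ℝ)) = (x.1 + μ, t) := by
    ext
    · rfl
    · simp only [Prod.snd_add, hr, hj]; push_cast; ring
  exact hxμ ▸ hΔ.2 x hx _ hμΔ (hxμ ▸ ht)

theorem IsTwistedData.liftT_isMaximalClosedSubrootSystem (hT : IsTwistedData R a b m)
    (hM : IsMaximalClosedSubrootSystemF R M) (hshort : ∃ μ ∈ M, ShortR R a μ) :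
    IsMaximalClosedSubrootSystem (twistedRS R a b m) (liftT R a b m M) := by
  refine ⟨hT.liftT_isClosedSubrootSystem hM.1.1 hM.1.2, fun Δ hΔ hsub =>
    Set.Subset.antisymm (fun x hx => ?_) hsub⟩
  have hxΦ := hΔ.1.2.1 hx
  refine mem_liftT_iff.2 ⟨hxΦ, by_contra fun hxM => ?_⟩
  obtain ⟨μ, hμM, hs, hsum⟩ := hT.exists_short_add_mem hM hshort (fst_mem_of_mem_twistedRS hxΦ) hxM
  have hfull := add_short_mem_fullGradient hΔ hsub hx hμM ⟨hM.1.1.2.1 hμM, hs⟩ hsum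
  rw [hT.fullGradient_eq hM hΔ hsub] at hfull
  have hμneg := hM.1.1.neg_mem hT.root hμM
  exact hxM (by simpa using hM.1.2 _ hfull _ hμneg (by simpa using fst_mem_of_mem_twistedRS hxΦ))

end Maximality

section Gradient

variable {S : Set V}

lemma IsTwistedData.isMaximalClosedSubrootSystemF_of_liftT (hT : IsTwistedData R a b m)
    (hS : IsSubrootSystemF R S) (hScl : IsClosedInF R S)
    (hmax : IsMaximalClosedSubrootSystem (twistedRS R a b m) (liftT R a b m S)) :
    IsMaximalClosedSubrootSystemF R S := by
  refine ⟨⟨hS, hScl⟩, fun T hTsub hTcl hST => ?_⟩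
  have := hmax.2 _ (hT.liftT_isClosedSubrootSystem hTsub hTcl) (liftT_mono hST)
  rw [← hT.GrT_liftT hTsub.2.1, this, hT.GrT_liftT hS.2.1]

lemma IsTwistedData.exists_short_mem_of_liftT (hT : IsTwistedData R a b m)
    (hS : IsMaximalClosedSubrootSystem (twistedRS R a b m) (liftT R a b m S)) :
    ∃ α ∈ S, ShortR R a α := by
  by_contra! hlong
  obtain ⟨α, hαR, hαs⟩ := hT.ex_short
  have hsub : liftT R a b m S ⊆ untwistedPart R a b m := fun x hx => by
    obtain ⟨hxΦ, hxS⟩ := mem_liftT_iff.1 hx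
    have hxR := fst_mem_of_mem_twistedRS hxΦ
    exact ⟨hxΦ, hT.exists_mul_of_mem_twistedRS hxΦ
      ((hT.len _ hxR).resolve_left fun h => hlong _ hxS ⟨hxR, h⟩)⟩
  have hα : (α, 0) ∈ liftT R a b m S :=
    hS.2 _ hT.untwistedPart_isClosedSubrootSystem hsub ▸ ⟨hT.mk_zero_mem_twistedRS hαR, 0, by simp⟩
  exact hlong α (mem_liftT_iff.1 hα).2 ⟨hαR, hαs⟩

end Gradient

theorem statement11_general
    {V : Type*} [NormedAddCommGroup V] [InnerProductSpace ℝ V]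
    (R : Set V) (a b : ℝ) (m : ℕ) (hT : IsTwistedData R a b m)
    (Ψ : Set (V × ℝ)) :
    (IsMaximalClosedSubrootSystem (twistedRS R a b m) Ψ ∧
      GrT Ψ ⊂ R ∧ IsClosedInF R (GrT Ψ)) ↔
      ∃ M : Set V, IsMaximalClosedSubrootSystemF R M ∧
        (∃ α ∈ M, ShortR R a α) ∧ Ψ = liftT R a b m M := by
  constructor
  · rintro ⟨hΨ, hGr, hGrcl⟩
    have hGrF := isSubrootSystemF_GrT hΨ.1.1 hGr
    have hΨ_eq : Ψ = liftT R a b m (GrT Ψ) :=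
      (hΨ.2 _ (hT.liftT_isClosedSubrootSystem hGrF hGrcl) (subset_liftT_GrT hΨ.1.1.2.1)).symm
    rw [hΨ_eq] at hΨ
    exact ⟨GrT Ψ, hT.isMaximalClosedSubrootSystemF_of_liftT hGrF hGrcl hΨ,
      hT.exists_short_mem_of_liftT hΨ, hΨ_eq⟩
  · rintro ⟨M, hM, hshort, rfl⟩
    have hMR := hM.1.1.2.1
    rw [hT.GrT_liftT hMR]
    exact ⟨hT.liftT_isMaximalClosedSubrootSystem hM hshort,
      Set.ssubset_iff_subset_ne.2 ⟨hMR, hM.1.1.2.2.1⟩, hM.1.2⟩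

/-- `Ψ` is a maximal closed subroot system of the twisted affine
root system whose gradient is a proper closed subset of `Φ̊` iff `Ψ` is the lift of
a maximal closed subroot system of `Φ̊` containing a short root. -/
theorem statement11
    {V : Type*} [NormedAddCommGroup V] [InnerProductSpace ℝ V] [FiniteDimensional ℝ V]
    (R : Set V) (a b : ℝ) (m : ℕ) (hT : IsTwistedData R a b m)
    (Ψ : Set (V × ℝ)) :
    (IsMaximalClosedSubrootSystem (twistedRS R a b m) Ψ ∧
      GrT Ψ ⊂ R ∧ IsClosedInF R (GrT Ψ)) ↔
      ∃ M : Set V, IsMaximalClosedSubrootSystemF R M ∧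
        (∃ α ∈ M, ShortR R a α) ∧ Ψ = liftT R a b m M :=
  statement11_general R a b m hT Ψ
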